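/- If R is a stuttering bisimulation between pointed systems and R s t with s a deadlocked state (no →₁-successor), then there exists a deadlocked state t' reachable from t with R s t', provided the second system has no infinite stuttering: every infinite →₂-sequence from a state related to a deadlocked state must leave the R-image of that state. -/
import Mathlib


structure PTS where
  S : Type
  step : S → S → Prop
  init : S

def IsStutterBisim (A B : PTS) (R : A.S → B.S → Prop) : Prop :=
  R A.init B.init ∧
  (∀ s t, R s t → ∀ s', A.step s s' →
    ∃ t', Relation.ReflTransGen B.step t t' ∧ R s' t') ∧
  (∀ s t, R s t → ∀ t', B.step t t' →
    ∃ s', Relation.ReflTransGen A.step s s' ∧ R s' t')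

theorem stmt_7 (A B : PTS) (R : A.S → B.S → Prop) (h : IsStutterBisim A B R)
    (s : A.S) (t : B.S) (hst : R s t)
    (hdead : ¬∃ s', A.step s s')
    (hwf : ¬∃ f : ℕ → B.S, f 0 = t ∧ (∀ i, B.step (f i) (f (i + 1))) ∧ ∀ i, R s (f i)) :
    ∃ t', Relation.ReflTransGen B.step t t' ∧ R s t' ∧ ¬∃ t'', B.step t' t'' := by
  by_contra hcon
  push_neg at hcon
  apply hwf
  obtain ⟨-, -, hback⟩ := h
  have key : ∀ t', Relation.ReflTransGen B.step t t' → R s t' →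
      ∃ t'', B.step t' t'' ∧ R s t'' := by
    intro t' ht hr
    obtain ⟨t'', hstep⟩ := hcon t' ht hr
    obtain ⟨s', hs', hrs'⟩ := hback s t' hr t'' hstep
    rcases hs'.cases_head with rfl | ⟨c, hc, -⟩
    · exact ⟨t'', hstep, hrs'⟩
    · exact absurd ⟨c, hc⟩ hdead
  choose nxt h1 h2 using key
  let g : ℕ → {b : B.S // Relation.ReflTransGen B.step t b ∧ R s b} :=
    fun n => Nat.rec ⟨t, Relation.ReflTransGen.refl, hst⟩
      (fun _ p => ⟨nxt p.1 p.2.1 p.2.2,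
        p.2.1.tail (h1 p.1 p.2.1 p.2.2), h2 p.1 p.2.1 p.2.2⟩) n
  exact ⟨fun n => (g n).1, rfl, fun i => h1 (g i).1 (g i).2.1 (g i).2.2,
    fun i => (g i).2.2⟩
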